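/- Let F be a C¹ function on a Banach manifold with Finsler metric, X a vector field satisfying ‖X(p)‖² ≤ ε₁²ε₂ · dF_p(X(p)) for all p, and φ_t the local flow of −X. Then for t₁ < t₂ in the domain of the flow through p, dist(φ_{t₁}(p), φ_{t₂}(p))² ≤ ε₁²ε₂ (t₂−t₁)(F(φ_{t₁}(p)) − F(φ_{t₂}(p))). Consequently, if F is bounded below and the Finsler metric is complete, the flow of −X is positively complete. -/

import Mathlib

/-!
Write `d = ‖φ t₂ - φ t₁‖`, `Δ = F (φ t₁) - F (φ t₂)` and `C = ε₁²ε₂`. For every real `λ`,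
AM–GM gives `2|λ|‖φ'‖ ≤ λ²‖φ'‖² + 1 ≤ λ² C (-(F ∘ φ)') + 1`, so the mean value inequality
yields `2|λ| d ≤ λ² C Δ + (t₂ - t₁)`. This quadratic in `λ` is nonnegative everywhere, so its
discriminant is nonpositive, which is `d² ≤ C (t₂ - t₁) Δ`. This replaces the Cauchy–Schwarz
argument of the paper, which would need `‖φ'‖` to be integrable.

Along `tₙ ↑ b`, the values `F (φ tₙ)` decrease and are bounded below, hence form a Cauchy
sequence, and the estimate with `t₂ - t₁ ≤ b - t₀` transfers this to `φ tₙ`.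
-/

open Filter Set

section MeanValue

variable {E : Type*} [NormedAddCommGroup E] [NormedSpace ℝ E]
  {f f' : ℝ → E} {h h' : ℝ → ℝ} {a b : ℝ}

theorem two_mul_abs_mul_norm_sub_le_of_norm_deriv_sq_le (hab : a ≤ b)
    (hf : ContinuousOn f (Icc a b)) (hf' : ∀ x ∈ Ico a b, HasDerivWithinAt f (f' x) (Ici x) x)
    (hh : ContinuousOn h (Icc a b)) (hh' : ∀ x ∈ Ico a b, HasDerivWithinAt h (h' x) (Ici x) x)
    (bound : ∀ x ∈ Ico a b, ‖f' x‖ ^ 2 ≤ h' x) (l : ℝ) :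
    2 * |l| * ‖f b - f a‖ ≤ l ^ 2 * (h b - h a) + (b - a) := by
  have key := image_norm_le_of_norm_deriv_right_le_deriv_boundary'
    (f := fun s => (2 * |l|) • (f s - f a)) (B := fun s => l ^ 2 * (h s - h a) + (s - a))
    ((hf.sub continuousOn_const).const_smul _)
    (fun x hx => ((hf' x hx).sub_const (f a)).const_smul (2 * |l|))
    (by simp) (by fun_prop)
    (fun x hx => (((hh' x hx).sub_const (h a)).const_mul (l ^ 2)).add
      ((hasDerivWithinAt_id x _).sub_const a))
    (fun x hx => by
      have hAMGM : 2 * |l| * ‖f' x‖ ≤ l ^ 2 * ‖f' x‖ ^ 2 + 1 := by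
        nlinarith [sq_nonneg (|l| * ‖f' x‖ - 1), sq_abs l]
      rw [norm_smul, Real.norm_of_nonneg (by positivity)]
      nlinarith [bound x hx, sq_nonneg l])
    (right_mem_Icc.mpr hab)
  rwa [norm_smul, Real.norm_of_nonneg (by positivity)] at key

theorem norm_sub_sq_le_of_norm_deriv_sq_le (hab : a ≤ b)
    (hf : ContinuousOn f (Icc a b)) (hf' : ∀ x ∈ Ico a b, HasDerivWithinAt f (f' x) (Ici x) x)
    (hh : ContinuousOn h (Icc a b)) (hh' : ∀ x ∈ Ico a b, HasDerivWithinAt h (h' x) (Ici x) x)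
    (bound : ∀ x ∈ Ico a b, ‖f' x‖ ^ 2 ≤ h' x) :
    ‖f b - f a‖ ^ 2 ≤ (b - a) * (h b - h a) := by
  have hquad : ∀ l, 0 ≤ (h b - h a) * (l * l) + (-2 * ‖f b - f a‖) * l + (b - a) :=
    fun l => by
      nlinarith [two_mul_abs_mul_norm_sub_le_of_norm_deriv_sq_le hab hf hf' hh hh' bound l,
        le_abs_self l, norm_nonneg (f b - f a)]
  have hdiscr := discrim_le_zero hquad
  rw [discrim] at hdiscr
  nlinarith

end MeanValue

theorem cauchySeq_of_dist_sq_le_mul_dist {α β : Type*} [PseudoMetricSpace α]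
    [PseudoMetricSpace β] {x : ℕ → α} {y : ℕ → β} {K : ℝ} (hy : CauchySeq y)
    (hxy : ∀ m n, dist (x m) (x n) ^ 2 ≤ K * dist (y m) (y n)) : CauchySeq x := by
  rw [Metric.cauchySeq_iff] at hy ⊢
  intro ε hε
  obtain ⟨N, hN⟩ := hy (ε ^ 2 / (|K| + 1)) (by positivity)
  refine ⟨N, fun m hm n hn => lt_of_pow_lt_pow_left₀ 2 hε.le ?_⟩
  calc dist (x m) (x n) ^ 2 ≤ K * dist (y m) (y n) := hxy m n
    _ ≤ (|K| + 1) * dist (y m) (y n) := by gcongr; linarith [le_abs_self K]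
    _ < (|K| + 1) * (ε ^ 2 / (|K| + 1)) := by gcongr; exact hN m hm n hn
    _ = ε ^ 2 := by field_simp

theorem dist_sq_le_of_norm_deriv_sq_le_neg_deriv {E : Type*} [NormedAddCommGroup E]
    [NormedSpace ℝ E] {φ : ℝ → E} {u g : ℝ → ℝ} {C : ℝ} (hφ : Differentiable ℝ φ)
    (hu : ∀ t, HasDerivAt u (g t) t) (hX : ∀ t, ‖deriv φ t‖ ^ 2 ≤ C * -g t)
    {t₁ t₂ : ℝ} (h12 : t₁ ≤ t₂) :
    dist (φ t₁) (φ t₂) ^ 2 ≤ C * (t₂ - t₁) * (u t₁ - u t₂) := by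
  have hu_cont : Continuous u := continuous_iff_continuousAt.2 fun t => (hu t).continuousAt
  have := norm_sub_sq_le_of_norm_deriv_sq_le (h := fun s => -C * u s) h12
    hφ.continuous.continuousOn (fun x _ => (hφ x).hasDerivAt.hasDerivWithinAt)
    (by fun_prop) (fun x _ => ((hu x).const_mul (-C)).hasDerivWithinAt)
    (fun x _ => by linarith [hX x])
  rw [dist_comm, dist_eq_norm]
  linarith

/-- Uhlenbeck's completeness estimate: if `φ` is a flow line of `−X` where
`‖X(p)‖² ≤ ε₁²ε₂ dF_p(X(p))`, i.e. `‖φ'(t)‖² ≤ ε₁²ε₂ ·(−(F∘φ)'(t))`, then for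
`t₁ < t₂` one has
`dist(φ(t₁),φ(t₂))² ≤ ε₁²ε₂ (t₂−t₁)(F(φ(t₁)) − F(φ(t₂)))`; consequently, if
`F` is bounded below, `φ(tₙ)` is Cauchy along any monotone sequence `tₙ → b`,
so the flow of `−X` is positively complete. -/
theorem stmt19 {E : Type*} [NormedAddCommGroup E] [NormedSpace ℝ E]
    (F : E → ℝ) (φ : ℝ → E) (g : ℝ → ℝ) (ε₁ ε₂ : ℝ) (hε₁ : 0 < ε₁) (hε₂ : 0 < ε₂)
    (hφ : Differentiable ℝ φ)
    (hFφ : ∀ t, HasDerivAt (fun s => F (φ s)) (g t) t)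
    (hX : ∀ t, ‖deriv φ t‖^2 ≤ ε₁^2 * ε₂ * (-(g t))) :
    (∀ t₁ t₂ : ℝ, t₁ < t₂ →
      dist (φ t₁) (φ t₂) ^ 2 ≤ ε₁^2 * ε₂ * (t₂ - t₁) * (F (φ t₁) - F (φ t₂))) ∧
    ((∃ m : ℝ, ∀ x, m ≤ F x) →
      ∀ (b : ℝ) (t : ℕ → ℝ), StrictMono t → Tendsto t atTop (nhds b) →
        CauchySeq (fun n => φ (t n))) := by
  have estimate : ∀ t₁ t₂ : ℝ, t₁ ≤ t₂ →
      dist (φ t₁) (φ t₂) ^ 2 ≤ ε₁^2 * ε₂ * (t₂ - t₁) * (F (φ t₁) - F (φ t₂)) :=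
    fun _ _ h12 => dist_sq_le_of_norm_deriv_sq_le_neg_deriv hφ hFφ hX h12
  refine ⟨fun t₁ t₂ h12 => estimate t₁ t₂ h12.le, ?_⟩
  rintro ⟨M, hM⟩ b t ht htb
  have hC : 0 < ε₁^2 * ε₂ := by positivity
  have hFφ_anti : Antitone fun s => F (φ s) :=
    antitone_of_hasDerivAt_nonpos hFφ fun s =>
      (by nlinarith [hX s, sq_nonneg ‖deriv φ s‖] : g s ≤ 0)
  have hFφt : CauchySeq fun n => F (φ (t n)) :=
    (tendsto_atTop_ciInf (hFφ_anti.comp_monotone ht.monotone)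
      ⟨M, by rintro _ ⟨n, rfl⟩; exact hM _⟩).cauchySeq
  refine cauchySeq_of_dist_sq_le_mul_dist (K := ε₁^2 * ε₂ * (b - t 0)) hFφt fun m n => ?_
  wlog hmn : m ≤ n generalizing m n
  · rw [dist_comm, dist_comm (F (φ (t m)))]
    exact this n m (le_of_not_ge hmn)
  have hdecr : 0 ≤ F (φ (t m)) - F (φ (t n)) := sub_nonneg.2 (hFφ_anti (ht.monotone hmn))
  have hspan : t n - t m ≤ b - t 0 := by
    linarith [ht.monotone.ge_of_tendsto htb n, ht.monotone (Nat.zero_le m)]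
  rw [Real.dist_eq, abs_of_nonneg hdecr]
  calc _ ≤ ε₁^2 * ε₂ * (t n - t m) * (F (φ (t m)) - F (φ (t n))) :=
        estimate _ _ (ht.monotone hmn)
    _ ≤ _ := by gcongr
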